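/- Let n ≥ 1 and let Δ ⊂ ℝ^{1+n} be the root system of osp(2|2n). Define: P(0) := {±δ_k ± δ_l : k ≠ l} ∪ {±2δ_k} ∪ {ε₁ ± δ_k : all k}, and −P(0) := {−α : α ∈ P(0)}; P(n) := {δ_k − δ_l : k ≠ l} ∪ {±(ε₁ − δ_k) : all k} ∪ {δ_k + δ_l : k ≠ l} ∪ {2δ_k : all k} ∪ {ε₁ + δ_k : all k}; and P̄(n) := {δ_k − δ_l : k ≠ l} ∪ {±(ε₁ + δ_k) : all k} ∪ {δ_k + δ_l : k ≠ l} ∪ {2δ_k : all k} ∪ {−ε₁ + δ_k : all k}. Then a subset P ⊆ Δ is a cominuscule parabolic set of roots of Δ if and only if w(P) ∈ {P(0), −P(0), P(n), P̄(n)} for some w ∈ W; each of these four sets is itself a cominuscule parabolic set of roots, and no two of them lie in the same W-orbit. -/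

import Mathlib

open Pointwise

open Pointwise

/-- A proper subset `P` of a symmetric root set `Δ` is a parabolic set of roots if
`Δ = P ∪ (-P)` and `P` is closed under sums lying in `Δ`. -/
def IsParabolic {V : Type*} [AddCommGroup V] (Δ P : Set V) : Prop :=
  P ⊂ Δ ∧ Δ = P ∪ (-P) ∧ ∀ α ∈ P, ∀ β ∈ P, α + β ∈ Δ → α + β ∈ P

/-- A parabolic set of roots is cominuscule if the sum of any two elements of its
nilradical `N⁺ = P \ (-P)` is not a root. -/
def IsCominuscule {V : Type*} [AddCommGroup V] (Δ P : Set V) : Prop :=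
  IsParabolic Δ P ∧ ∀ α ∈ P \ (-P), ∀ β ∈ P \ (-P), α + β ∉ Δ

namespace Osp2

variable {n : ℕ}

/-- `ℝ^{1+n}`, with coordinates indexed by `Fin 1 ⊕ Fin n`. -/
abbrev V (n : ℕ) := (Fin 1 ⊕ Fin n) → ℝ

noncomputable def ε₁ : V n := Pi.single (Sum.inl 0) 1

noncomputable def δ (k : Fin n) : V n := Pi.single (Sum.inr k) 1

/-- The root system of `osp(2|2n)`. -/
noncomputable def Δroot (n : ℕ) : Set (V n) :=
  {v | ∃ k l : Fin n, k ≠ l ∧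
      (v = δ k + δ l ∨ v = δ k - δ l ∨ v = -δ k + δ l ∨ v = -δ k - δ l)} ∪
  {v | ∃ k : Fin n, v = (2 : ℝ) • δ k ∨ v = -((2 : ℝ) • δ k)} ∪
  {v | ∃ k : Fin n, v = ε₁ + δ k ∨ v = ε₁ - δ k ∨ v = -ε₁ + δ k ∨ v = -ε₁ - δ k}

/-- `P(0)`. -/
noncomputable def P0 (n : ℕ) : Set (V n) :=
  {v | ∃ k l : Fin n, k ≠ l ∧
      (v = δ k + δ l ∨ v = δ k - δ l ∨ v = -δ k + δ l ∨ v = -δ k - δ l)} ∪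
  {v | ∃ k : Fin n, v = (2 : ℝ) • δ k ∨ v = -((2 : ℝ) • δ k)} ∪
  {v | ∃ k : Fin n, v = ε₁ + δ k ∨ v = ε₁ - δ k}

/-- `P(n)`. -/
noncomputable def Pn (n : ℕ) : Set (V n) :=
  {v | ∃ k l : Fin n, k ≠ l ∧ v = δ k - δ l} ∪
  {v | ∃ k : Fin n, v = ε₁ - δ k ∨ v = δ k - ε₁} ∪
  {v | ∃ k l : Fin n, k ≠ l ∧ v = δ k + δ l} ∪
  {v | ∃ k : Fin n, v = (2 : ℝ) • δ k} ∪
  {v | ∃ k : Fin n, v = ε₁ + δ k}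

/-- `P̄(n)`. -/
noncomputable def Pnbar (n : ℕ) : Set (V n) :=
  {v | ∃ k l : Fin n, k ≠ l ∧ v = δ k - δ l} ∪
  {v | ∃ k : Fin n, v = ε₁ + δ k ∨ v = -ε₁ - δ k} ∪
  {v | ∃ k l : Fin n, k ≠ l ∧ v = δ k + δ l} ∪
  {v | ∃ k : Fin n, v = (2 : ℝ) • δ k} ∪
  {v | ∃ k : Fin n, v = -ε₁ + δ k}

/-- The action of an element of the Weyl group `W` of `sp(2n)`: it fixes `ε₁` and
maps `δ_k ↦ ±δ_{τ(k)}`. -/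
def act (τ : Equiv.Perm (Fin n)) (t : Fin n → ℝ) : V n → V n :=
  fun v => Sum.elim (fun i => v (Sum.inl i)) (fun k => t k * v (Sum.inr (τ.symm k)))

/-- The four representative parabolic subsets. -/
noncomputable def reps (n : ℕ) : Set (Set (V n)) :=
  {P0 n, -P0 n, Pn n, Pnbar n}

end Osp2

/-!
Cominuscule parabolic sets here are half-spaces `{α ∈ Δ | 0 ≤ f α}` for a linear form `f`
taking only the values `0, ±c` on `Δ`. Sign changes in `W` make every `2δ_k` lie in `P`. If
moreover every `-2δ_k` lies in `P`, the Levi component contains `sp(2n)` and closure under sums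
forces `P = ±P(0)`, with `f = ±ε₁*`. Otherwise no `-2δ_k` lies in `P`, the cominuscule condition
puts every `δ_k - δ_l` in `P`, and the two possible positions of the roots `ε₁ - δ_k` give
`P(n)` (`f = ε₁* + Σ δ_k*`) and `P̄(n)` (`f = Σ δ_k* - ε₁*`). The `ε₁`-coordinates of the
nilradicals of the four sets, `{1}, {-1}, {0, 1}, {0, -1}`, are `W`-invariant and tell them apart.
-/

open Function

section Parabolic

variable {V W : Type*} [AddCommGroup V] [AddCommGroup W] {Δ P : Set V}

def nilradicalRoots (P : Set V) : Set V := P \ -P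

theorem image_nilradicalRoots (f : V →+ W) (hf : Injective f) (P : Set V) :
    f '' nilradicalRoots P = nilradicalRoots (f '' P) := by
  rw [nilradicalRoots, nilradicalRoots, Set.image_sdiff hf, Set.image_neg]

namespace IsParabolic

theorem neg_eq (hP : IsParabolic Δ P) : -Δ = Δ := by
  rw [hP.2.1, Set.union_neg, neg_neg, Set.union_comm]

theorem mem_or_neg_mem (hP : IsParabolic Δ P) {v : V} (hv : v ∈ Δ) : v ∈ P ∨ -v ∈ P := by
  rwa [hP.2.1] at hv

theorem mem_of_add_eq (hP : IsParabolic Δ P) {a b c : V} (ha : a ∈ P) (hb : b ∈ P) (hc : c ∈ Δ)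
    (h : a + b = c) : c ∈ P :=
  h ▸ hP.2.2 a ha b hb (h ▸ hc)

theorem image (hP : IsParabolic Δ P) (f : V →+ W) (hf : Injective f) :
    IsParabolic (f '' Δ) (f '' P) := by
  obtain ⟨hsub, hcov, hclosed⟩ := hP
  refine ⟨hf.image_strictMono hsub, by rw [hcov, Set.image_union, Set.image_neg], ?_⟩
  rintro _ ⟨a, ha, rfl⟩ _ ⟨b, hb, rfl⟩ hab
  rw [← map_add, hf.mem_set_image] at hab ⊢
  exact hclosed a ha b hb hab

theorem neg (hP : IsParabolic Δ P) : IsParabolic Δ (-P) := by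
  simpa only [coe_negAddMonoidHom, Set.image_neg_eq_neg, hP.neg_eq]
    using hP.image negAddMonoidHom neg_injective

theorem eq_setOf_nonneg (hP : IsParabolic Δ P) (f : V →+ ℝ)
    (hzero : ∀ v ∈ Δ, f v = 0 → v ∈ P) (hneg : ∀ v ∈ Δ, f v < 0 → v ∉ P) :
    P = {v ∈ Δ | 0 ≤ f v} := by
  ext v
  refine ⟨fun hv => ⟨hP.1.1 hv, not_lt.mp fun h => hneg v (hP.1.1 hv) h hv⟩, fun ⟨hv, hfv⟩ => ?_⟩
  rcases hfv.eq_or_lt with h | h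
  · exact hzero v hv h.symm
  · refine (hP.mem_or_neg_mem hv).resolve_right (hneg (-v) ?_ (by simpa using h))
    rwa [← hP.neg_eq, Set.neg_mem_neg]

end IsParabolic

theorem IsCominuscule.image (hP : IsCominuscule Δ P) (f : V →+ W) (hf : Injective f) :
    IsCominuscule (f '' Δ) (f '' P) := by
  refine ⟨hP.1.image f hf, ?_⟩
  change ∀ α ∈ nilradicalRoots _, ∀ β ∈ nilradicalRoots _, _
  rw [← image_nilradicalRoots f hf]
  rintro _ ⟨a, ha, rfl⟩ _ ⟨b, hb, rfl⟩ hab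
  rw [← map_add, hf.mem_set_image] at hab
  exact hP.2 a ha b hb hab

theorem IsCominuscule.add_ne (hP : IsCominuscule Δ P) {a b c : V} (ha : a ∈ nilradicalRoots P)
    (hb : b ∈ nilradicalRoots P) (hc : c ∈ Δ) : a + b ≠ c :=
  fun h => hP.2 a ha b hb (h ▸ hc)

theorem mem_nilradicalRoots {a b : V} (ha : a ∈ P) (hb : b ∉ P) (h : -a = b) :
    a ∈ nilradicalRoots P :=
  ⟨ha, fun hx => hb (h ▸ hx)⟩

theorem nilradicalRoots_setOf_nonneg (hΔ : -Δ = Δ) (f : V →+ ℝ) :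
    nilradicalRoots {v ∈ Δ | 0 ≤ f v} = {v ∈ Δ | 0 < f v} := by
  ext v
  have : -v ∈ Δ ↔ v ∈ Δ := by rw [← Set.mem_neg, hΔ]
  simp only [nilradicalRoots, Set.mem_sdiff, Set.mem_neg, Set.mem_ofPred_eq, map_neg, this,
    neg_nonneg, not_and, not_le]
  exact ⟨fun ⟨⟨hv, _⟩, h⟩ => ⟨hv, h hv⟩, fun ⟨hv, h⟩ => ⟨⟨hv, h.le⟩, fun _ => h⟩⟩

theorem neg_setOf_nonneg (hΔ : -Δ = Δ) (f : V →+ ℝ) :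
    -{v ∈ Δ | 0 ≤ f v} = {v ∈ Δ | 0 ≤ (-f) v} := by
  ext v
  have : -v ∈ Δ ↔ v ∈ Δ := by rw [← Set.mem_neg, hΔ]
  simp [this]

theorem isCominuscule_setOf_nonneg (hΔ : -Δ = Δ) (f : V →+ ℝ) {c : ℝ} (hc : 0 < c)
    (hval : ∀ v ∈ Δ, f v = 0 ∨ f v = c ∨ f v = -c) (hneg : ∃ v ∈ Δ, f v < 0) :
    IsCominuscule Δ {v ∈ Δ | 0 ≤ f v} := by
  have hmem : ∀ {v}, -v ∈ Δ ↔ v ∈ Δ := by intro v; rw [← Set.mem_neg, hΔ]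
  refine ⟨⟨⟨fun v hv => hv.1, fun hsub => ?_⟩, ?_, ?_⟩, ?_⟩
  · obtain ⟨v, hv, hfv⟩ := hneg
    exact not_le.mpr hfv (hsub hv).2
  · ext v
    simp only [Set.mem_union, Set.mem_neg, Set.mem_ofPred_eq, hmem, map_neg, neg_nonneg,
      ← and_or_left]
    exact ⟨fun hv => ⟨hv, le_total _ _⟩, And.left⟩
  · exact fun α hα β hβ hαβ => ⟨hαβ, by rw [map_add]; exact add_nonneg hα.2 hβ.2⟩
  · change ∀ α ∈ nilradicalRoots _, ∀ β ∈ nilradicalRoots _, _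
    rw [nilradicalRoots_setOf_nonneg hΔ]
    intro α hα β hβ hαβ
    have hα' : f α = c := by rcases hval α hα.1 with h | h | h <;> linarith [hα.2]
    have hβ' : f β = c := by rcases hval β hβ.1 with h | h | h <;> linarith [hβ.2]
    rcases hval _ hαβ with h | h | h <;> rw [map_add, hα', hβ'] at h <;> linarith

end Parabolic

namespace Osp2

variable {n : ℕ}

@[simp] theorem ε₁_inl (i : Fin 1) : (ε₁ : V n) (Sum.inl i) = 1 := by
  rw [Subsingleton.elim i 0]; simp [ε₁]

@[simp] theorem ε₁_inr (k : Fin n) : (ε₁ : V n) (Sum.inr k) = 0 := by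
  simp [ε₁]

@[simp] theorem δ_inl (k : Fin n) (i : Fin 1) : δ k (Sum.inl i) = 0 := by
  simp [δ]

@[simp] theorem δ_inr (k l : Fin n) : δ k (Sum.inr l) = if l = k then 1 else 0 := by
  simp [δ, Pi.single_apply]

noncomputable def εcoord : V n →+ ℝ := Pi.evalAddMonoidHom _ (Sum.inl 0)

noncomputable def δsum : V n →+ ℝ := ∑ k, Pi.evalAddMonoidHom _ (Sum.inr k)

@[simp] theorem εcoord_ε₁ : εcoord (ε₁ : V n) = 1 := by simp [εcoord]
@[simp] theorem εcoord_δ (k : Fin n) : εcoord (δ k) = 0 := by simp [εcoord]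
@[simp] theorem δsum_ε₁ : δsum (ε₁ : V n) = 0 := by simp [δsum]
@[simp] theorem δsum_δ (k : Fin n) : δsum (δ k) = 1 := by simp [δsum]

theorem δ_add_δ_mem_Δroot {k l : Fin n} (h : k ≠ l) : δ k + δ l ∈ Δroot n :=
  Or.inl (Or.inl ⟨k, l, h, Or.inl rfl⟩)
theorem δ_sub_δ_mem_Δroot {k l : Fin n} (h : k ≠ l) : δ k - δ l ∈ Δroot n :=
  Or.inl (Or.inl ⟨k, l, h, Or.inr (Or.inl rfl)⟩)
theorem neg_δ_add_δ_mem_Δroot {k l : Fin n} (h : k ≠ l) : -δ k + δ l ∈ Δroot n :=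
  Or.inl (Or.inl ⟨k, l, h, Or.inr (Or.inr (Or.inl rfl))⟩)
theorem neg_δ_sub_δ_mem_Δroot {k l : Fin n} (h : k ≠ l) : -δ k - δ l ∈ Δroot n :=
  Or.inl (Or.inl ⟨k, l, h, Or.inr (Or.inr (Or.inr rfl))⟩)
theorem two_smul_δ_mem_Δroot (k : Fin n) : (2 : ℝ) • δ k ∈ Δroot n :=
  Or.inl (Or.inr ⟨k, Or.inl rfl⟩)
theorem neg_two_smul_δ_mem_Δroot (k : Fin n) : -((2 : ℝ) • δ k) ∈ Δroot n :=
  Or.inl (Or.inr ⟨k, Or.inr rfl⟩)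
theorem ε₁_add_δ_mem_Δroot (k : Fin n) : ε₁ + δ k ∈ Δroot n :=
  Or.inr ⟨k, Or.inl rfl⟩
theorem ε₁_sub_δ_mem_Δroot (k : Fin n) : ε₁ - δ k ∈ Δroot n :=
  Or.inr ⟨k, Or.inr (Or.inl rfl)⟩
theorem neg_ε₁_add_δ_mem_Δroot (k : Fin n) : -ε₁ + δ k ∈ Δroot n :=
  Or.inr ⟨k, Or.inr (Or.inr (Or.inl rfl))⟩
theorem neg_ε₁_sub_δ_mem_Δroot (k : Fin n) : -ε₁ - δ k ∈ Δroot n :=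
  Or.inr ⟨k, Or.inr (Or.inr (Or.inr rfl))⟩

theorem neg_mem_Δroot {v : V n} (hv : v ∈ Δroot n) : -v ∈ Δroot n := by
  rcases hv with (⟨k, l, h, rfl | rfl | rfl | rfl⟩ | ⟨k, rfl | rfl⟩) | ⟨k, rfl | rfl | rfl | rfl⟩
  · convert neg_δ_sub_δ_mem_Δroot h using 1; abel
  · convert neg_δ_add_δ_mem_Δroot h using 1; abel
  · convert δ_sub_δ_mem_Δroot h using 1; abel
  · convert δ_add_δ_mem_Δroot h using 1; abel
  · exact neg_two_smul_δ_mem_Δroot k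
  · simpa using two_smul_δ_mem_Δroot k
  · convert neg_ε₁_sub_δ_mem_Δroot k using 1; abel
  · convert neg_ε₁_add_δ_mem_Δroot k using 1; abel
  · convert ε₁_sub_δ_mem_Δroot k using 1; abel
  · convert ε₁_add_δ_mem_Δroot k using 1; abel

theorem neg_Δroot : -Δroot n = Δroot n :=
  Set.ext fun v => ⟨fun hv => neg_neg v ▸ neg_mem_Δroot hv, neg_mem_Δroot⟩

theorem Δroot_induction {p : V n → Prop} (neg : ∀ v, p v → p (-v))
    (add : ∀ k l, k ≠ l → p (δ k + δ l)) (sub : ∀ k l, k ≠ l → p (δ k - δ l))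
    (two : ∀ k, p ((2 : ℝ) • δ k)) (ε_add : ∀ k, p (ε₁ + δ k)) (ε_sub : ∀ k, p (ε₁ - δ k))
    {v : V n} (hv : v ∈ Δroot n) : p v := by
  rcases hv with (⟨k, l, h, rfl | rfl | rfl | rfl⟩ | ⟨k, rfl | rfl⟩) | ⟨k, rfl | rfl | rfl | rfl⟩
  · exact add k l h
  · exact sub k l h
  · convert neg _ (sub k l h) using 1; abel
  · convert neg _ (add k l h) using 1; abel
  · exact two k
  · exact neg _ (two k)
  · exact ε_add k
  · exact ε_sub k
  · convert neg _ (ε_sub k) using 1; abel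
  · convert neg _ (ε_add k) using 1; abel

theorem smul_δ_add_smul_δ_mem_Δroot {s s' : ℝ} (hs : s = 1 ∨ s = -1) (hs' : s' = 1 ∨ s' = -1)
    {k l : Fin n} (h : k ≠ l) : s • δ k + s' • δ l ∈ Δroot n := by
  rcases hs with rfl | rfl <;> rcases hs' with rfl | rfl <;> simp only [one_smul, neg_smul]
  · exact δ_add_δ_mem_Δroot h
  · exact δ_sub_δ_mem_Δroot h
  · exact neg_δ_add_δ_mem_Δroot h
  · exact neg_δ_sub_δ_mem_Δroot h

theorem smul_two_smul_δ_mem_Δroot {s : ℝ} (hs : s = 1 ∨ s = -1) (k : Fin n) :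
    s • (2 : ℝ) • δ k ∈ Δroot n := by
  rcases hs with rfl | rfl <;> simp only [one_smul, neg_smul]
  · exact two_smul_δ_mem_Δroot k
  · exact neg_two_smul_δ_mem_Δroot k

theorem ε₁_add_smul_δ_mem_Δroot {s : ℝ} (hs : s = 1 ∨ s = -1) (k : Fin n) :
    ε₁ + s • δ k ∈ Δroot n := by
  rcases hs with rfl | rfl <;> simp only [one_smul, neg_smul, ← sub_eq_add_neg]
  · exact ε₁_add_δ_mem_Δroot k
  · exact ε₁_sub_δ_mem_Δroot k

section WeylGroup

variable {τ : Equiv.Perm (Fin n)} {t : Fin n → ℝ}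

@[simp] theorem act_inl (v : V n) (i : Fin 1) : act τ t v (Sum.inl i) = v (Sum.inl i) := rfl

@[simp] theorem act_inr (v : V n) (k : Fin n) :
    act τ t v (Sum.inr k) = t k * v (Sum.inr (τ.symm k)) := rfl

theorem act_add (v w : V n) : act τ t (v + w) = act τ t v + act τ t w := by
  ext (i | k) <;> simp [mul_add]

theorem act_smul (c : ℝ) (v : V n) : act τ t (c • v) = c • act τ t v := by
  ext (i | k) <;> simp [mul_left_comm]

noncomputable def actHom (τ : Equiv.Perm (Fin n)) (t : Fin n → ℝ) : V n →+ V n :=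
  AddMonoidHom.mk' (act τ t) act_add

@[simp] theorem coe_actHom : ⇑(actHom τ t) = act τ t := rfl

theorem act_neg (v : V n) : act τ t (-v) = -act τ t v := map_neg (actHom τ t) v

theorem act_sub (v w : V n) : act τ t (v - w) = act τ t v - act τ t w := map_sub (actHom τ t) v w

theorem act_ε₁ : act τ t (ε₁ : V n) = ε₁ := by
  ext (i | k) <;> simp

theorem act_δ (j : Fin n) : act τ t (δ j) = t (τ j) • δ (τ j) := by
  ext (i | k)
  · simp
  · simp only [act_inr, δ_inr, Equiv.symm_apply_eq, Pi.smul_apply, smul_eq_mul]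
    split_ifs <;> simp_all

theorem act_symm_act (ht : ∀ k, t k = 1 ∨ t k = -1) (v : V n) :
    act τ.symm (t ∘ τ) (act τ t v) = v := by
  ext (i | k)
  · rfl
  · rcases ht (τ k) with h | h <;> simp [h]

theorem act_act_symm (ht : ∀ k, t k = 1 ∨ t k = -1) (v : V n) :
    act τ t (act τ.symm (t ∘ τ) v) = v := by
  ext (i | k)
  · rfl
  · rcases ht k with h | h <;> simp [h]

theorem act_injective (ht : ∀ k, t k = 1 ∨ t k = -1) : Injective (act τ t) :=
  LeftInverse.injective (act_symm_act ht)

theorem act_mem_Δroot (ht : ∀ k, t k = 1 ∨ t k = -1) {v : V n} (hv : v ∈ Δroot n) :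
    act τ t v ∈ Δroot n := by
  have hsign (k : Fin n) : -t k = 1 ∨ -t k = -1 := by rcases ht k with h | h <;> simp [h]
  refine Δroot_induction (p := fun v => act τ t v ∈ Δroot n) (fun v hv => ?_)
    (fun k l h => ?_) (fun k l h => ?_) (fun k => ?_) (fun k => ?_) (fun k => ?_) hv
  · rw [act_neg]; exact neg_mem_Δroot hv
  · rw [act_add, act_δ, act_δ]
    exact smul_δ_add_smul_δ_mem_Δroot (ht _) (ht _) (τ.injective.ne h)
  · rw [act_sub, act_δ, act_δ, sub_eq_add_neg, ← neg_smul]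
    exact smul_δ_add_smul_δ_mem_Δroot (ht _) (hsign _) (τ.injective.ne h)
  · rw [act_smul, act_δ, smul_comm]
    exact smul_two_smul_δ_mem_Δroot (ht _) _
  · rw [act_add, act_ε₁, act_δ]
    exact ε₁_add_smul_δ_mem_Δroot (ht _) _
  · rw [act_sub, act_ε₁, act_δ, sub_eq_add_neg, ← neg_smul]
    exact ε₁_add_smul_δ_mem_Δroot (hsign _) _

theorem image_act_Δroot (ht : ∀ k, t k = 1 ∨ t k = -1) : act τ t '' Δroot n = Δroot n := by
  refine (Set.image_subset_iff.mpr fun v hv => act_mem_Δroot ht hv).antisymm fun v hv => ?_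
  exact ⟨_, act_mem_Δroot (fun k => ht (τ k)) hv, act_act_symm ht v⟩

theorem isCominuscule_image_act (ht : ∀ k, t k = 1 ∨ t k = -1) {P : Set (V n)}
    (hP : IsCominuscule (Δroot n) P) : IsCominuscule (Δroot n) (act τ t '' P) := by
  simpa only [coe_actHom, image_act_Δroot ht] using hP.image (actHom τ t) (act_injective ht)

theorem image_act_symm_image_act (ht : ∀ k, t k = 1 ∨ t k = -1) (P : Set (V n)) :
    act τ.symm (t ∘ τ) '' (act τ t '' P) = P := by
  simp only [Set.image_image, act_symm_act ht, Set.image_id']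

theorem εcoord_image_nilradicalRoots_image_act (ht : ∀ k, t k = 1 ∨ t k = -1) (Q : Set (V n)) :
    εcoord '' nilradicalRoots (act τ t '' Q) = εcoord '' nilradicalRoots Q := by
  rw [← coe_actHom, ← image_nilradicalRoots _ (act_injective ht), Set.image_image]
  rfl

end WeylGroup

theorem exists_signs_two_smul_δ_mem {P : Set (V n)} (hP : IsParabolic (Δroot n) P) :
    ∃ t : Fin n → ℝ, (∀ k, t k = 1 ∨ t k = -1) ∧ ∀ k, (2 : ℝ) • δ k ∈ act 1 t '' P := by
  classical
  refine ⟨fun k => if (2 : ℝ) • δ k ∈ P then 1 else -1, fun k => by dsimp only; split_ifs <;> simp,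
    fun k => ?_⟩
  by_cases h : (2 : ℝ) • δ k ∈ P
  · exact ⟨_, h, by rw [act_smul, act_δ]; simp [h]⟩
  · refine ⟨_, (hP.mem_or_neg_mem (two_smul_δ_mem_Δroot k)).resolve_left h, ?_⟩
    rw [act_neg, act_smul, act_δ]
    simp [h]

theorem εcoord_eq_of_mem_Δroot {v : V n} (hv : v ∈ Δroot n) :
    εcoord v = 0 ∨ εcoord v = 1 ∨ εcoord v = -1 := by
  rcases hv with (⟨k, l, h, rfl | rfl | rfl | rfl⟩ | ⟨k, rfl | rfl⟩) | ⟨k, rfl | rfl | rfl | rfl⟩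
    <;> norm_num [two_smul]

theorem εcoord_add_δsum_eq_of_mem_Δroot {v : V n} (hv : v ∈ Δroot n) :
    (εcoord + δsum : V n →+ ℝ) v = 0 ∨ (εcoord + δsum : V n →+ ℝ) v = 2 ∨
      (εcoord + δsum : V n →+ ℝ) v = -2 := by
  rcases hv with (⟨k, l, h, rfl | rfl | rfl | rfl⟩ | ⟨k, rfl | rfl⟩) | ⟨k, rfl | rfl | rfl | rfl⟩
    <;> norm_num [two_smul]

theorem δsum_sub_εcoord_eq_of_mem_Δroot {v : V n} (hv : v ∈ Δroot n) :
    (δsum - εcoord : V n →+ ℝ) v = 0 ∨ (δsum - εcoord : V n →+ ℝ) v = 2 ∨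
      (δsum - εcoord : V n →+ ℝ) v = -2 := by
  rcases hv with (⟨k, l, h, rfl | rfl | rfl | rfl⟩ | ⟨k, rfl | rfl⟩) | ⟨k, rfl | rfl | rfl | rfl⟩
    <;> norm_num [two_smul]

theorem eq_ε₁_add_or_sub_of_εcoord_eq_one {v : V n} (hv : v ∈ Δroot n) (h1 : εcoord v = 1) :
    ∃ k, v = ε₁ + δ k ∨ v = ε₁ - δ k := by
  rcases hv with (⟨k, l, h, rfl | rfl | rfl | rfl⟩ | ⟨k, rfl | rfl⟩) | ⟨k, rfl | rfl | rfl | rfl⟩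
    <;> first | exact ⟨k, .inl rfl⟩ | exact ⟨k, .inr rfl⟩ | norm_num [two_smul] at h1

theorem P0_eq : P0 n = {v ∈ Δroot n | 0 ≤ εcoord v} := by
  ext v
  constructor
  · rintro ((⟨k, l, h, rfl | rfl | rfl | rfl⟩ | ⟨k, rfl | rfl⟩) | ⟨k, rfl | rfl⟩) <;>
      refine ⟨?_, by norm_num [two_smul]⟩
    exacts [δ_add_δ_mem_Δroot h, δ_sub_δ_mem_Δroot h, neg_δ_add_δ_mem_Δroot h,
      neg_δ_sub_δ_mem_Δroot h, two_smul_δ_mem_Δroot k, neg_two_smul_δ_mem_Δroot k,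
      ε₁_add_δ_mem_Δroot k, ε₁_sub_δ_mem_Δroot k]
  · rintro ⟨(hsp | hsp) | ⟨k, rfl | rfl | rfl | rfl⟩, hf⟩
    · exact .inl (.inl hsp)
    · exact .inl (.inr hsp)
    · exact .inr ⟨k, .inl rfl⟩
    · exact .inr ⟨k, .inr rfl⟩
    all_goals norm_num at hf

theorem neg_P0_eq : -P0 n = {v ∈ Δroot n | 0 ≤ (-εcoord : V n →+ ℝ) v} := by
  rw [P0_eq, neg_setOf_nonneg neg_Δroot]

theorem Pn_eq : Pn n = {v ∈ Δroot n | 0 ≤ (εcoord + δsum : V n →+ ℝ) v} := by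
  ext v
  constructor
  · rintro ((((⟨k, l, h, rfl⟩ | ⟨k, rfl | rfl⟩) | ⟨k, l, h, rfl⟩) | ⟨k, rfl⟩) | ⟨k, rfl⟩) <;>
      refine ⟨?_, by norm_num [two_smul]⟩
    · exact δ_sub_δ_mem_Δroot h
    · exact ε₁_sub_δ_mem_Δroot k
    · convert neg_ε₁_add_δ_mem_Δroot k using 1; abel
    · exact δ_add_δ_mem_Δroot h
    · exact two_smul_δ_mem_Δroot k
    · exact ε₁_add_δ_mem_Δroot k
  · rintro ⟨(⟨k, l, h, rfl | rfl | rfl | rfl⟩ | ⟨k, rfl | rfl⟩) | ⟨k, rfl | rfl | rfl | rfl⟩, hf⟩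
    · exact .inl (.inl (.inr ⟨k, l, h, rfl⟩))
    · exact .inl (.inl (.inl (.inl ⟨k, l, h, rfl⟩)))
    · exact .inl (.inl (.inl (.inl ⟨l, k, h.symm, by abel⟩)))
    · norm_num at hf
    · exact .inl (.inr ⟨k, rfl⟩)
    · norm_num [two_smul] at hf
    · exact .inr ⟨k, rfl⟩
    · exact .inl (.inl (.inl (.inr ⟨k, .inl rfl⟩)))
    · exact .inl (.inl (.inl (.inr ⟨k, .inr (by abel)⟩)))
    · norm_num at hf

theorem Pnbar_eq : Pnbar n = {v ∈ Δroot n | 0 ≤ (δsum - εcoord : V n →+ ℝ) v} := by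
  ext v
  constructor
  · rintro ((((⟨k, l, h, rfl⟩ | ⟨k, rfl | rfl⟩) | ⟨k, l, h, rfl⟩) | ⟨k, rfl⟩) | ⟨k, rfl⟩) <;>
      refine ⟨?_, by norm_num [two_smul]⟩
    · exact δ_sub_δ_mem_Δroot h
    · exact ε₁_add_δ_mem_Δroot k
    · exact neg_ε₁_sub_δ_mem_Δroot k
    · exact δ_add_δ_mem_Δroot h
    · exact two_smul_δ_mem_Δroot k
    · exact neg_ε₁_add_δ_mem_Δroot k
  · rintro ⟨(⟨k, l, h, rfl | rfl | rfl | rfl⟩ | ⟨k, rfl | rfl⟩) | ⟨k, rfl | rfl | rfl | rfl⟩, hf⟩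
    · exact .inl (.inl (.inr ⟨k, l, h, rfl⟩))
    · exact .inl (.inl (.inl (.inl ⟨k, l, h, rfl⟩)))
    · exact .inl (.inl (.inl (.inl ⟨l, k, h.symm, by abel⟩)))
    · norm_num at hf
    · exact .inl (.inr ⟨k, rfl⟩)
    · norm_num [two_smul] at hf
    · exact .inl (.inl (.inl (.inr ⟨k, .inl rfl⟩)))
    · norm_num at hf
    · exact .inr ⟨k, rfl⟩
    · exact .inl (.inl (.inl (.inr ⟨k, .inr rfl⟩)))

theorem isCominuscule_of_mem_reps (hn : 1 ≤ n) {Q : Set (V n)} (hQ : Q ∈ reps n) :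
    IsCominuscule (Δroot n) Q := by
  let k : Fin n := ⟨0, hn⟩
  simp only [reps, Set.mem_insert_iff, Set.mem_singleton_iff] at hQ
  rcases hQ with rfl | rfl | rfl | rfl
  · rw [P0_eq]
    exact isCominuscule_setOf_nonneg neg_Δroot _ one_pos (fun v => εcoord_eq_of_mem_Δroot)
      ⟨_, neg_ε₁_sub_δ_mem_Δroot k, by simp⟩
  · rw [neg_P0_eq]
    refine isCominuscule_setOf_nonneg neg_Δroot _ one_pos (fun v hv => ?_)
      ⟨_, ε₁_add_δ_mem_Δroot k, by simp⟩
    rcases εcoord_eq_of_mem_Δroot hv with h | h | h <;> simp [h]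
  · rw [Pn_eq]
    exact isCominuscule_setOf_nonneg neg_Δroot _ two_pos (fun v => εcoord_add_δsum_eq_of_mem_Δroot)
      ⟨_, neg_two_smul_δ_mem_Δroot k, by norm_num [two_smul]⟩
  · rw [Pnbar_eq]
    exact isCominuscule_setOf_nonneg neg_Δroot _ two_pos (fun v => δsum_sub_εcoord_eq_of_mem_Δroot)
      ⟨_, neg_two_smul_δ_mem_Δroot k, by norm_num [two_smul]⟩

theorem εcoord_image_nilradicalRoots_P0 (hn : 1 ≤ n) :
    εcoord '' nilradicalRoots (P0 n) = {1} := by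
  rw [P0_eq, nilradicalRoots_setOf_nonneg neg_Δroot]
  refine Set.eq_singleton_iff_unique_mem.mpr
    ⟨⟨ε₁ + δ ⟨0, hn⟩, ⟨ε₁_add_δ_mem_Δroot _, by simp⟩, by simp⟩, ?_⟩
  rintro _ ⟨v, ⟨hv, hpos⟩, rfl⟩
  rcases εcoord_eq_of_mem_Δroot hv with h | h | h <;> linarith

theorem εcoord_image_nilradicalRoots_neg_P0 (hn : 1 ≤ n) :
    εcoord '' nilradicalRoots (-P0 n) = {-1} := by
  rw [neg_P0_eq, nilradicalRoots_setOf_nonneg neg_Δroot]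
  refine Set.eq_singleton_iff_unique_mem.mpr
    ⟨⟨-ε₁ - δ ⟨0, hn⟩, ⟨neg_ε₁_sub_δ_mem_Δroot _, by simp⟩, by simp⟩, ?_⟩
  rintro _ ⟨v, ⟨hv, hpos⟩, rfl⟩
  rw [AddMonoidHom.neg_apply] at hpos
  rcases εcoord_eq_of_mem_Δroot hv with h | h | h <;> linarith

theorem εcoord_image_nilradicalRoots_Pn (hn : 1 ≤ n) :
    εcoord '' nilradicalRoots (Pn n) = {0, 1} := by
  rw [Pn_eq, nilradicalRoots_setOf_nonneg neg_Δroot]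
  refine subset_antisymm ?_ (Set.insert_subset_iff.mpr
    ⟨⟨(2 : ℝ) • δ ⟨0, hn⟩, ⟨two_smul_δ_mem_Δroot _, by norm_num [two_smul]⟩, by simp [two_smul]⟩,
      Set.singleton_subset_iff.mpr ⟨ε₁ + δ ⟨0, hn⟩, ⟨ε₁_add_δ_mem_Δroot _, by norm_num⟩, by simp⟩⟩)
  rintro _ ⟨v, ⟨hv, hpos⟩, rfl⟩
  rcases hv with (⟨k, l, h, rfl | rfl | rfl | rfl⟩ | ⟨k, rfl | rfl⟩) | ⟨k, rfl | rfl | rfl | rfl⟩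
    <;> revert hpos <;> norm_num [two_smul]

theorem εcoord_image_nilradicalRoots_Pnbar (hn : 1 ≤ n) :
    εcoord '' nilradicalRoots (Pnbar n) = {0, -1} := by
  rw [Pnbar_eq, nilradicalRoots_setOf_nonneg neg_Δroot]
  refine subset_antisymm ?_ (Set.insert_subset_iff.mpr
    ⟨⟨(2 : ℝ) • δ ⟨0, hn⟩, ⟨two_smul_δ_mem_Δroot _, by norm_num [two_smul]⟩, by simp [two_smul]⟩,
      Set.singleton_subset_iff.mpr ⟨-ε₁ + δ ⟨0, hn⟩, ⟨neg_ε₁_add_δ_mem_Δroot _, by norm_num⟩,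
        by simp⟩⟩)
  rintro _ ⟨v, ⟨hv, hpos⟩, rfl⟩
  rcases hv with (⟨k, l, h, rfl | rfl | rfl | rfl⟩ | ⟨k, rfl | rfl⟩) | ⟨k, rfl | rfl | rfl | rfl⟩
    <;> revert hpos <;> norm_num [two_smul]

theorem eq_of_εcoord_image_nilradicalRoots_eq (hn : 1 ≤ n) {Q Q' : Set (V n)}
    (hQ : Q ∈ reps n) (hQ' : Q' ∈ reps n)
    (h : εcoord '' nilradicalRoots Q = εcoord '' nilradicalRoots Q') : Q = Q' := by
  -- membership of `0` and of `1` already separates `{1}`, `{-1}`, `{0, 1}` and `{0, -1}`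
  have h0 := congrArg ((0 : ℝ) ∈ ·) h
  have h1 := congrArg ((1 : ℝ) ∈ ·) h
  simp only [reps, Set.mem_insert_iff, Set.mem_singleton_iff] at hQ hQ'
  rcases hQ with rfl | rfl | rfl | rfl <;> rcases hQ' with rfl | rfl | rfl | rfl <;>
    first
    | rfl
    | revert h0 h1
      norm_num [εcoord_image_nilradicalRoots_P0 hn, εcoord_image_nilradicalRoots_neg_P0 hn,
        εcoord_image_nilradicalRoots_Pn hn, εcoord_image_nilradicalRoots_Pnbar hn]

section Classification

variable {P : Set (V n)}

theorem δ_add_δ_mem (hP : IsParabolic (Δroot n) P) (h2 : ∀ k, (2 : ℝ) • δ k ∈ P) {k l : Fin n}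
    (h : k ≠ l) : δ k + δ l ∈ P := by
  rcases hP.mem_or_neg_mem (δ_sub_δ_mem_Δroot h) with h' | h'
  · exact hP.mem_of_add_eq h' (h2 l) (δ_add_δ_mem_Δroot h) (by module)
  · exact hP.mem_of_add_eq h' (h2 k) (δ_add_δ_mem_Δroot h) (by module)

/-- The roots of `sp(2n)` are those with vanishing `ε₁`-coordinate. -/
def ContainsSp (P : Set (V n)) : Prop :=
  ∀ v ∈ Δroot n, εcoord v = 0 → v ∈ P

theorem ContainsSp.neg (hsp : ContainsSp P) : ContainsSp (-P) := fun v hv h0 =>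
  Set.mem_neg.mpr (hsp _ (neg_mem_Δroot hv) (by simp [h0]))

theorem containsSp_of_two_smul_δ_mem (hP : IsParabolic (Δroot n) P)
    (h2 : ∀ k, (2 : ℝ) • δ k ∈ P) (hneg2 : ∀ k, -((2 : ℝ) • δ k) ∈ P) : ContainsSp P := by
  have hsub {k l : Fin n} (h : k ≠ l) : δ k - δ l ∈ P :=
    hP.mem_of_add_eq (δ_add_δ_mem hP h2 h) (hneg2 l) (δ_sub_δ_mem_Δroot h) (by module)
  intro v hv h0
  rcases hv with (⟨k, l, h, rfl | rfl | rfl | rfl⟩ | ⟨k, rfl | rfl⟩) | ⟨k, rfl | rfl | rfl | rfl⟩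
  · exact δ_add_δ_mem hP h2 h
  · exact hsub h
  · exact hP.mem_of_add_eq (hneg2 k) (δ_add_δ_mem hP h2 h) (neg_δ_add_δ_mem_Δroot h) (by module)
  · exact hP.mem_of_add_eq (hneg2 k) (hsub h) (neg_δ_sub_δ_mem_Δroot h) (by module)
  · exact h2 k
  · exact hneg2 k
  all_goals norm_num at h0

theorem ContainsSp.mem_of_εcoord_eq_one (hsp : ContainsSp P) (hP : IsParabolic (Δroot n) P)
    {u : V n} (hu : u ∈ Δroot n) (hu1 : εcoord u = 1) (huP : u ∈ P)
    {v : V n} (hv : v ∈ Δroot n) (hv1 : εcoord v = 1) : v ∈ P := by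
  obtain ⟨k, hk⟩ : ∃ k, ε₁ + δ k ∈ P := by
    obtain ⟨k, rfl | rfl⟩ := eq_ε₁_add_or_sub_of_εcoord_eq_one hu hu1
    · exact ⟨k, huP⟩
    · exact ⟨k, hP.mem_of_add_eq huP (hsp _ (two_smul_δ_mem_Δroot k) (by simp [two_smul]))
        (ε₁_add_δ_mem_Δroot k) (by module)⟩
  have hadd (m : Fin n) : ε₁ + δ m ∈ P := by
    rcases eq_or_ne k m with rfl | h
    · exact hk
    · exact hP.mem_of_add_eq hk (hsp _ (neg_δ_add_δ_mem_Δroot h) (by simp))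
        (ε₁_add_δ_mem_Δroot m) (by module)
  obtain ⟨m, rfl | rfl⟩ := eq_ε₁_add_or_sub_of_εcoord_eq_one hv hv1
  · exact hadd m
  · exact hP.mem_of_add_eq (hadd m) (hsp _ (neg_two_smul_δ_mem_Δroot m) (by simp [two_smul]))
      (ε₁_sub_δ_mem_Δroot m) (by module)

theorem ContainsSp.eq_P0 (hsp : ContainsSp P) (hP : IsParabolic (Δroot n) P) {k : Fin n}
    (hk : ε₁ + δ k ∈ P) : P = P0 n := by
  rw [P0_eq]
  refine hP.eq_setOf_nonneg εcoord hsp fun v hv hneg hvP => hP.1.2 fun w hw => ?_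
  have hv1 : εcoord v = -1 := by
    rcases εcoord_eq_of_mem_Δroot hv with h | h | h <;> linarith
  rcases εcoord_eq_of_mem_Δroot hw with h | h | h
  · exact hsp w hw h
  · exact hsp.mem_of_εcoord_eq_one hP (ε₁_add_δ_mem_Δroot k) (by simp) hk hw h
  · simpa using hsp.neg.mem_of_εcoord_eq_one hP.neg (neg_mem_Δroot hv) (by simp [hv1])
      (by simpa using hvP) (neg_mem_Δroot hw) (by simp [h])

theorem ContainsSp.eq_P0_or_eq_neg_P0 (hsp : ContainsSp P) (hP : IsParabolic (Δroot n) P)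
    (k : Fin n) : P = P0 n ∨ P = -P0 n := by
  rcases hP.mem_or_neg_mem (ε₁_add_δ_mem_Δroot k) with h | h
  · exact .inl (hsp.eq_P0 hP h)
  · exact .inr (by rw [← hsp.neg.eq_P0 hP.neg (Set.mem_neg.mpr h), neg_neg])

theorem forall_neg_two_smul_δ_notMem (hP : IsCominuscule (Δroot n) P)
    (h2 : ∀ k, (2 : ℝ) • δ k ∈ P) {k : Fin n} (hk : -((2 : ℝ) • δ k) ∉ P) (m : Fin n) :
    -((2 : ℝ) • δ m) ∉ P := by
  intro hm
  have hkm : k ≠ m := by rintro rfl; exact hk hm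
  have hP' := hP.1
  have hneg_add : -δ k - δ m ∉ P := fun hx =>
    hk (hP'.mem_of_add_eq (hP'.mem_of_add_eq hx (h2 m) (neg_δ_add_δ_mem_Δroot hkm) (by module)) hx
      (neg_two_smul_δ_mem_Δroot k) (by module))
  have hneg_sub : -(δ k - δ m) ∉ P := fun hx =>
    hneg_add (hP'.mem_of_add_eq hx hm (neg_δ_sub_δ_mem_Δroot hkm) (by module))
  have hsub := (hP'.mem_or_neg_mem (δ_sub_δ_mem_Δroot hkm)).resolve_right hneg_sub
  exact hP.add_ne (mem_nilradicalRoots (δ_add_δ_mem hP' h2 hkm) hneg_add (by abel))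
    ⟨hsub, hneg_sub⟩ (two_smul_δ_mem_Δroot k) (by module)

theorem neg_δ_sub_δ_notMem (hP : IsParabolic (Δroot n) P) (h2 : ∀ k, (2 : ℝ) • δ k ∈ P)
    (hneg2 : ∀ k, -((2 : ℝ) • δ k) ∉ P) {k l : Fin n} (h : k ≠ l) : -δ k - δ l ∉ P := fun hx =>
  hneg2 l (hP.mem_of_add_eq hx (hP.mem_of_add_eq hx (h2 k) (δ_sub_δ_mem_Δroot h) (by module))
    (neg_two_smul_δ_mem_Δroot l) (by module))

theorem δ_sub_δ_mem (hP : IsCominuscule (Δroot n) P) (h2 : ∀ k, (2 : ℝ) • δ k ∈ P)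
    (hneg2 : ∀ k, -((2 : ℝ) • δ k) ∉ P) {k l : Fin n} (h : k ≠ l) : δ k - δ l ∈ P := by
  by_contra hkl
  have hx := (hP.1.mem_or_neg_mem (δ_sub_δ_mem_Δroot h)).resolve_left hkl
  exact hP.add_ne (mem_nilradicalRoots hx hkl (neg_neg _)) ⟨h2 k, hneg2 k⟩
    (δ_add_δ_mem_Δroot h) (by module)

theorem eq_Pn_of_ε₁_sub_δ_mem (hP : IsCominuscule (Δroot n) P) (h2 : ∀ k, (2 : ℝ) • δ k ∈ P)
    (hneg2 : ∀ k, -((2 : ℝ) • δ k) ∉ P) {k : Fin n} (hk : ε₁ - δ k ∈ P) : P = Pn n := by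
  have hP' := hP.1
  have hsub (l : Fin n) : ε₁ - δ l ∈ P := by
    rcases eq_or_ne k l with rfl | h
    · exact hk
    · exact hP'.mem_of_add_eq hk (δ_sub_δ_mem hP h2 hneg2 h) (ε₁_sub_δ_mem_Δroot l) (by module)
  have hneg_add (l : Fin n) : -ε₁ + δ l ∈ P := by
    by_contra hx
    exact hP.add_ne (mem_nilradicalRoots (hsub l) hx (by abel)) ⟨h2 l, hneg2 l⟩
      (ε₁_add_δ_mem_Δroot l) (by module)
  have hneg_sub (l : Fin n) : -ε₁ - δ l ∉ P := fun hx =>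
    hneg2 l (hP'.mem_of_add_eq (hsub l) hx (neg_two_smul_δ_mem_Δroot l) (by module))
  rw [Pn_eq]
  refine hP'.eq_setOf_nonneg _ (fun v hv h0 => ?_) (fun v hv hneg => ?_)
  · rcases hv with (⟨k, l, h, rfl | rfl | rfl | rfl⟩ | ⟨k, rfl | rfl⟩) | ⟨k, rfl | rfl | rfl | rfl⟩
      <;> try (norm_num [two_smul] at h0; done)
    exacts [δ_sub_δ_mem hP h2 hneg2 h, by convert δ_sub_δ_mem hP h2 hneg2 h.symm using 1; abel,
      hsub k, hneg_add k]
  · rcases hv with (⟨k, l, h, rfl | rfl | rfl | rfl⟩ | ⟨k, rfl | rfl⟩) | ⟨k, rfl | rfl | rfl | rfl⟩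
      <;> try (norm_num [two_smul] at hneg; done)
    exacts [neg_δ_sub_δ_notMem hP' h2 hneg2 h, hneg2 k, hneg_sub k]

theorem eq_Pnbar_of_forall_ε₁_sub_δ_notMem (hP : IsCominuscule (Δroot n) P)
    (h2 : ∀ k, (2 : ℝ) • δ k ∈ P) (hneg2 : ∀ k, -((2 : ℝ) • δ k) ∉ P)
    (hk : ∀ k, ε₁ - δ k ∉ P) : P = Pnbar n := by
  have hP' := hP.1
  have hneg_add (k : Fin n) : -ε₁ + δ k ∈ P := by
    convert (hP'.mem_or_neg_mem (ε₁_sub_δ_mem_Δroot k)).resolve_left (hk k) using 1; abel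
  have hadd (k : Fin n) : ε₁ + δ k ∈ P := by
    by_contra hx
    have hx' : -ε₁ - δ k ∈ P := by
      convert (hP'.mem_or_neg_mem (ε₁_add_δ_mem_Δroot k)).resolve_left hx using 1; abel
    exact hP.add_ne (mem_nilradicalRoots hx' hx (by abel)) ⟨h2 k, hneg2 k⟩
      (neg_ε₁_add_δ_mem_Δroot k) (by module)
  have hneg_sub (k : Fin n) : -ε₁ - δ k ∈ P := by
    by_contra hx
    exact hP.add_ne (mem_nilradicalRoots (hadd k) hx (by abel))
      (mem_nilradicalRoots (hneg_add k) (hk k) (by abel)) (two_smul_δ_mem_Δroot k) (by module)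
  rw [Pnbar_eq]
  refine hP'.eq_setOf_nonneg _ (fun v hv h0 => ?_) (fun v hv hneg => ?_)
  · rcases hv with (⟨k, l, h, rfl | rfl | rfl | rfl⟩ | ⟨k, rfl | rfl⟩) | ⟨k, rfl | rfl | rfl | rfl⟩
      <;> try (norm_num [two_smul] at h0; done)
    exacts [δ_sub_δ_mem hP h2 hneg2 h, by convert δ_sub_δ_mem hP h2 hneg2 h.symm using 1; abel,
      hadd k, hneg_sub k]
  · rcases hv with (⟨k, l, h, rfl | rfl | rfl | rfl⟩ | ⟨k, rfl | rfl⟩) | ⟨k, rfl | rfl | rfl | rfl⟩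
      <;> try (norm_num [two_smul] at hneg; done)
    exacts [neg_δ_sub_δ_notMem hP' h2 hneg2 h, hneg2 k, hk k]

theorem mem_reps_of_two_smul_δ_mem (hn : 1 ≤ n) (hP : IsCominuscule (Δroot n) P)
    (h2 : ∀ k, (2 : ℝ) • δ k ∈ P) : P ∈ reps n := by
  simp only [reps, Set.mem_insert_iff, Set.mem_singleton_iff]
  by_cases hneg2 : ∀ k, -((2 : ℝ) • δ k) ∈ P
  · rcases (containsSp_of_two_smul_δ_mem hP.1 h2 hneg2).eq_P0_or_eq_neg_P0 hP.1 ⟨0, hn⟩ with h | h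
    exacts [.inl h, .inr (.inl h)]
  obtain ⟨k, hk⟩ := not_forall.mp hneg2
  have hneg2 := forall_neg_two_smul_δ_notMem hP h2 hk
  by_cases hε : ∃ k, ε₁ - δ k ∈ P
  · obtain ⟨k, hk⟩ := hε
    exact .inr (.inr (.inl (eq_Pn_of_ε₁_sub_δ_mem hP h2 hneg2 hk)))
  · exact .inr (.inr (.inr (eq_Pnbar_of_forall_ε₁_sub_δ_notMem hP h2 hneg2 (not_exists.mp hε))))

end Classification

end Osp2

open Osp2

theorem stmt_8_general (n : ℕ) (hn : 1 ≤ n)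
    (P : Set (Osp2.V n)) :
    (IsCominuscule (Osp2.Δroot n) P ↔
      ∃ (τ : Equiv.Perm (Fin n)) (t : Fin n → ℝ), (∀ k, t k = 1 ∨ t k = -1) ∧
        Osp2.act τ t '' P ∈ Osp2.reps n) ∧
    (∀ Q ∈ Osp2.reps n, IsCominuscule (Osp2.Δroot n) Q) ∧
    (∀ Q ∈ Osp2.reps n, ∀ Q' ∈ Osp2.reps n, Q ≠ Q' →
      ¬ ∃ (τ : Equiv.Perm (Fin n)) (t : Fin n → ℝ), (∀ k, t k = 1 ∨ t k = -1) ∧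
        Osp2.act τ t '' Q = Q') := by
  refine ⟨⟨fun hP => ?_, fun ⟨τ, t, ht, hmem⟩ => ?_⟩, fun Q => isCominuscule_of_mem_reps hn, ?_⟩
  · obtain ⟨t, ht, h2⟩ := exists_signs_two_smul_δ_mem hP.1
    exact ⟨1, t, ht, mem_reps_of_two_smul_δ_mem hn (isCominuscule_image_act ht hP) h2⟩
  · simpa only [image_act_symm_image_act ht] using isCominuscule_image_act (τ := τ.symm)
      (t := t ∘ τ) (fun k => ht (τ k)) (isCominuscule_of_mem_reps hn hmem)
  · rintro Q hQ Q' hQ' hne ⟨τ, t, ht, rfl⟩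
    exact hne (eq_of_εcoord_image_nilradicalRoots_eq hn hQ hQ'
      (εcoord_image_nilradicalRoots_image_act ht Q).symm)

theorem stmt_8 (n : ℕ) (hn : 1 ≤ n)
    (P : Set (Osp2.V n)) (hP : P ⊆ Osp2.Δroot n) :
    (IsCominuscule (Osp2.Δroot n) P ↔
      ∃ (τ : Equiv.Perm (Fin n)) (t : Fin n → ℝ), (∀ k, t k = 1 ∨ t k = -1) ∧
        Osp2.act τ t '' P ∈ Osp2.reps n) ∧
    (∀ Q ∈ Osp2.reps n, IsCominuscule (Osp2.Δroot n) Q) ∧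
    (∀ Q ∈ Osp2.reps n, ∀ Q' ∈ Osp2.reps n, Q ≠ Q' →
      ¬ ∃ (τ : Equiv.Perm (Fin n)) (t : Fin n → ℝ), (∀ k, t k = 1 ∨ t k = -1) ∧
        Osp2.act τ t '' Q = Q') :=
  stmt_8_general n hn P
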